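/- arXiv:2401.15300 — 2 statements merged into one kernel-verified Lean document; each statement's English description precedes it below -/
import Mathlib

section
/- Let G be a connected graph on n ≥ 2 vertices. Then the spectral radius (i.e., the largest eigenvalue) of the resistance Laplacian R^L(G) is at least 2. -/
open Matrix Polynomial BigOperators

/-- `Ldag` is the Moore–Penrose inverse of `L`: `L Ldag L = L`, `Ldag L Ldag = Ldag`,
and both `L Ldag` and `Ldag L` are symmetric. -/
def IsMoorePenroseInv {V : Type*} [Fintype V] (L Ldag : Matrix V V ℝ) : Prop :=
  L * Ldag * L = L ∧ Ldag * L * Ldag = Ldag ∧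
    (L * Ldag)ᵀ = L * Ldag ∧ (Ldag * L)ᵀ = Ldag * L

/-- The resistance distance between vertices `i` and `j`, computed from the
Moore–Penrose inverse `Ldag` of the Laplacian: `r(i,j) = Ldag i i + Ldag j j - 2 Ldag i j`. -/
def resDist {V : Type*} (Ldag : Matrix V V ℝ) (i j : V) : ℝ :=
  Ldag i i + Ldag j j - 2 * Ldag i j

/-- The resistance distance matrix `R(G)`. -/
def resMatrix {V : Type*} [DecidableEq V] (Ldag : Matrix V V ℝ) : Matrix V V ℝ :=
  Matrix.of fun i j => if i = j then 0 else resDist Ldag i j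

/-- The resistance transmission `RTr(v) = ∑ u, r(u,v)` of a vertex `v`. -/
def resTrans {V : Type*} [Fintype V] (Ldag : Matrix V V ℝ) (v : V) : ℝ :=
  ∑ u, resDist Ldag u v

/-- The resistance Laplacian matrix `R^L = Diag(RTr) - R`. -/
def resLap {V : Type*} [Fintype V] [DecidableEq V] (Ldag : Matrix V V ℝ) : Matrix V V ℝ :=
  Matrix.diagonal (resTrans Ldag) - resMatrix Ldag

/-- The resistance signless Laplacian matrix `R^Q = Diag(RTr) + R`. -/
def resSignlessLap {V : Type*} [Fintype V] [DecidableEq V] (Ldag : Matrix V V ℝ) :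
    Matrix V V ℝ :=
  Matrix.diagonal (resTrans Ldag) + resMatrix Ldag

instance {V W : Type*} : DecidableRel (completeBipartiteGraph V W).Adj := fun v w => by
  simp only [completeBipartiteGraph_adj]
  infer_instance

/-!
For `u ≠ v` let `x = e_u - e_v`. As `x` is orthogonal to `ker L = ℝ·1`, `L† L x = x`, and
Cauchy–Schwarz for the positive semidefinite form of `L` at `L† x` and `x` gives
`4 = (xᵀx)² ≤ r(u,v) · xᵀLx ≤ r(u,v) · 2n`, i.e. `r(u,v) ≥ 2/n`. Hence every transmission is at
least `2(n-1)/n`, and the Rayleigh quotient of `R^L` at `x`, namely `(RTr u + RTr v)/2 + r(u,v)`,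
is at least `2`.
-/

namespace Matrix

variable {n : Type*} [Fintype n]

theorem IsSymm.dotProduct_mulVec_comm {R : Type*} [CommSemiring R] {A : Matrix n n R}
    (hA : A.IsSymm) (x y : n → R) : x ⬝ᵥ A *ᵥ y = y ⬝ᵥ A *ᵥ x := by
  simpa only [hA.eq] using dotProduct_transpose_mulVec A x y

variable [DecidableEq n]

theorem IsHermitian.exists_dotProduct_mulVec_le_eigenvalue_mul [Nonempty n] {A : Matrix n n ℝ}
    (hA : A.IsHermitian) (x : n → ℝ) : ∃ i, x ⬝ᵥ A *ᵥ x ≤ hA.eigenvalues i * (x ⬝ᵥ x) := by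
  obtain ⟨i, hi⟩ := Finite.exists_max hA.eigenvalues
  refine ⟨i, ?_⟩
  have hpsd : (algebraMap ℝ (Matrix n n ℝ) (hA.eigenvalues i) - A).PosSemidef := by
    refine posSemidef_iff_isHermitian_and_spectrum_nonneg.mpr ⟨?_, ?_⟩
    · exact (isHermitian_diagonal _).sub hA
    · rw [← spectrum.singleton_sub_eq, hA.spectrum_real_eq_range_eigenvalues]
      rintro _ ⟨_, rfl, _, ⟨j, rfl⟩, rfl⟩
      exact sub_nonneg.mpr (hi j)
  have := hpsd.dotProduct_mulVec_nonneg x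
  simp only [star_trivial, sub_mulVec, dotProduct_sub, Algebra.algebraMap_eq_smul_one, smul_mulVec,
    one_mulVec, dotProduct_smul, smul_eq_mul] at this
  linarith

theorem single_sub_single_dotProduct_mulVec {R : Type*} [CommRing R] (M : Matrix n n R) (u v : n) :
    (Pi.single u 1 - Pi.single v 1) ⬝ᵥ M *ᵥ (Pi.single u 1 - Pi.single v 1) =
      M u u + M v v - M u v - M v u := by
  simp only [sub_dotProduct, mulVec_sub, dotProduct_sub, single_one_dotProduct, mulVec_single_one,
    col_apply]
  ring

theorem single_sub_single_dotProduct_self {R : Type*} [CommRing R] {u v : n} (huv : u ≠ v) :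
    (Pi.single u 1 - Pi.single v 1 : n → R) ⬝ᵥ (Pi.single u 1 - Pi.single v 1) = 2 := by
  simp [huv, huv.symm, one_add_one_eq_two]

end Matrix

namespace IsMoorePenroseInv

variable {n : Type*} [Fintype n]

theorem mul_mulVec_eq_self {A B : Matrix n n ℝ} (h : IsMoorePenroseInv A B) {x : n → ℝ}
    (hx : ∀ z, A *ᵥ z = 0 → x ⬝ᵥ z = 0) : (B * A) *ᵥ x = x := by
  obtain ⟨hABA, -, -, hBA⟩ := h
  set z := x - (B * A) *ᵥ x
  have hAz : A *ᵥ z = 0 := by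
    rw [mulVec_sub, mulVec_mulVec, ← Matrix.mul_assoc, hABA, sub_self]
  have hz : z ⬝ᵥ z = 0 := by
    rw [sub_dotProduct, ← vecMul_transpose, ← dotProduct_mulVec, hBA, ← mulVec_mulVec, hAz,
      mulVec_zero, dotProduct_zero, hx z hAz, sub_zero]
  exact (sub_eq_zero.mp (dotProduct_self_eq_zero.mp hz)).symm

end IsMoorePenroseInv

namespace SimpleGraph

variable {V : Type*} [Fintype V] [DecidableEq V] {G : SimpleGraph V} [DecidableRel G.Adj]

theorem Connected.dotProduct_eq_zero_of_lapMatrix_mulVec_eq_zero (hG : G.Connected)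
    {x z : V → ℝ} (hx : ∑ i, x i = 0) (hz : G.lapMatrix ℝ *ᵥ z = 0) : x ⬝ᵥ z = 0 := by
  obtain ⟨w⟩ := hG.nonempty
  have hconst (i : V) : z i = z w :=
    (lapMatrix_mulVec_eq_zero_iff_forall_reachable G).mp hz i w (hG.preconnected i w)
  simp only [dotProduct, hconst, ← Finset.sum_mul, hx, zero_mul]

theorem single_sub_single_dotProduct_lapMatrix_mulVec_le (u v : V) :
    (Pi.single u 1 - Pi.single v 1) ⬝ᵥ G.lapMatrix ℝ *ᵥ (Pi.single u 1 - Pi.single v 1) ≤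
      2 * Fintype.card V := by
  have hdeg (w : V) : (G.degree w : ℝ) + 1 ≤ Fintype.card V := by
    exact_mod_cast G.degree_lt_card_verts w
  rw [single_sub_single_dotProduct_mulVec]
  simp only [lapMatrix, degMatrix, Matrix.sub_apply, diagonal_apply, adjMatrix_apply]
  split_ifs <;> linarith [hdeg u, hdeg v, (G.degree u).cast_nonneg (α := ℝ)]

end SimpleGraph

section Resistance

variable {V : Type*} {Ldag : Matrix V V ℝ}

theorem resDist_self (v : V) : resDist Ldag v v = 0 := by
  rw [resDist]
  ring

theorem resDist_comm (hsymm : Ldag.IsSymm) (u v : V) : resDist Ldag u v = resDist Ldag v u := by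
  rw [resDist, resDist, hsymm.apply u v]
  ring

variable [Fintype V] [DecidableEq V]

theorem isSymm_of_isHermitian_resLap (h : (resLap Ldag).IsHermitian) : Ldag.IsSymm := by
  ext i j
  by_cases hij : i = j
  · rw [hij, transpose_apply]
  · have := h.apply j i
    simp only [resLap, resMatrix, Matrix.sub_apply, diagonal_apply, of_apply, if_neg hij,
      if_neg (Ne.symm hij), star_trivial, resDist, transpose_apply] at this ⊢
    linarith

theorem single_sub_single_dotProduct_mulVec_eq_resDist (hsymm : Ldag.IsSymm) (u v : V) :
    (Pi.single u 1 - Pi.single v 1) ⬝ᵥ Ldag *ᵥ (Pi.single u 1 - Pi.single v 1) =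
      resDist Ldag u v := by
  rw [single_sub_single_dotProduct_mulVec, resDist, hsymm.apply u v]
  ring

theorem single_sub_single_dotProduct_resLap_mulVec (hsymm : Ldag.IsSymm) {u v : V}
    (huv : u ≠ v) :
    (Pi.single u 1 - Pi.single v 1) ⬝ᵥ resLap Ldag *ᵥ (Pi.single u 1 - Pi.single v 1) =
      resTrans Ldag u + resTrans Ldag v + 2 * resDist Ldag u v := by
  rw [single_sub_single_dotProduct_mulVec]
  simp only [resLap, resMatrix, Matrix.sub_apply, diagonal_apply, of_apply, if_neg huv,
    if_neg huv.symm, if_true, resDist_comm hsymm v u]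
  ring

theorem mul_le_resTrans {c : ℝ} {v : V} (h : ∀ u, u ≠ v → c ≤ resDist Ldag u v) :
    (Fintype.card V - 1) * c ≤ resTrans Ldag v := by
  have hcard : ((Finset.univ.erase v).card : ℝ) = Fintype.card V - 1 := by
    rw [Finset.card_erase_of_mem (Finset.mem_univ v), Finset.card_univ,
      Nat.cast_sub (Fintype.card_pos_iff.mpr ⟨v⟩), Nat.cast_one]
  rw [resTrans, ← Finset.sum_erase (f := fun u => resDist Ldag u v) _ (resDist_self v), ← hcard,
    ← nsmul_eq_mul]
  exact Finset.card_nsmul_le_sum _ _ _ fun u hu => h u (Finset.ne_of_mem_erase hu)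

theorem two_div_card_le_resDist {G : SimpleGraph V} [DecidableRel G.Adj] (hG : G.Connected)
    (hpen : IsMoorePenroseInv (G.lapMatrix ℝ) Ldag) (hsymm : Ldag.IsSymm) {u v : V}
    (huv : u ≠ v) : 2 / Fintype.card V ≤ resDist Ldag u v := by
  set L := G.lapMatrix ℝ
  set x : V → ℝ := Pi.single u 1 - Pi.single v 1
  set y := Ldag *ᵥ x
  have hL : L.IsSymm := G.isSymm_lapMatrix ℝ
  have hLpos (w : V → ℝ) : 0 ≤ w ⬝ᵥ L *ᵥ w := by
    simpa using (G.posSemidef_lapMatrix ℝ).dotProduct_mulVec_nonneg w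
  have hfix : (Ldag * L) *ᵥ x = x := hpen.mul_mulVec_eq_self fun z hz =>
    hG.dotProduct_eq_zero_of_lapMatrix_mulVec_eq_zero (by simp [x, Finset.sum_sub_distrib]) hz
  have hyx : y ⬝ᵥ L *ᵥ x = 2 := by
    rw [dotProduct_comm, hsymm.dotProduct_mulVec_comm, mulVec_mulVec, hfix,
      single_sub_single_dotProduct_self huv]
  have hyy : y ⬝ᵥ L *ᵥ y = resDist Ldag u v := by
    rw [dotProduct_comm, hsymm.dotProduct_mulVec_comm, mulVec_mulVec, mulVec_mulVec,
      hpen.2.1, single_sub_single_dotProduct_mulVec_eq_resDist hsymm]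
  have hcs := L.toBilin'.apply_mul_apply_le_of_forall_zero_le
    (fun w => by simpa only [toBilin'_apply'] using hLpos w) y x
  simp only [toBilin'_apply', hyx, hL.dotProduct_mulVec_comm x y, hyy] at hcs
  have hxx : x ⬝ᵥ L *ᵥ x ≤ 2 * Fintype.card V :=
    SimpleGraph.single_sub_single_dotProduct_lapMatrix_mulVec_le u v
  have hcard : (0 : ℝ) < Fintype.card V := by exact_mod_cast Fintype.card_pos_iff.mpr ⟨u⟩
  rw [div_le_iff₀ hcard]
  nlinarith [hLpos y, hLpos x]

end Resistance

theorem resLap_spectralRadius_ge_two {n : ℕ} (hn : 2 ≤ n)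
    (G : SimpleGraph (Fin n)) [DecidableRel G.Adj] (hG : G.Connected)
    (Ldag : Matrix (Fin n) (Fin n) ℝ)
    (hpen : IsMoorePenroseInv (G.lapMatrix ℝ) Ldag)
    (hherm : (resLap Ldag).IsHermitian) :
    ∃ i : Fin n, 2 ≤ hherm.eigenvalues i := by
  have hsymm := isSymm_of_isHermitian_resLap hherm
  let u : Fin n := ⟨0, by omega⟩
  let v : Fin n := ⟨1, by omega⟩
  have huv : u ≠ v := by simp [u, v, Fin.ext_iff]
  have hres {a b : Fin n} (hab : a ≠ b) : 2 / n ≤ resDist Ldag a b := by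
    simpa using two_div_card_le_resDist hG hpen hsymm hab
  have hu : (n - 1) * (2 / n) ≤ resTrans Ldag u := by
    simpa using mul_le_resTrans fun a ha => hres ha
  have hv : (n - 1) * (2 / n) ≤ resTrans Ldag v := by
    simpa using mul_le_resTrans fun a ha => hres ha
  have : Nonempty (Fin n) := ⟨u⟩
  obtain ⟨i, hi⟩ :=
    hherm.exists_dotProduct_mulVec_le_eigenvalue_mul (Pi.single u 1 - Pi.single v 1)
  rw [single_sub_single_dotProduct_resLap_mulVec hsymm huv,
    single_sub_single_dotProduct_self huv] at hi
  have hn0 : (n : ℝ) ≠ 0 := by positivity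
  have hsum : (n - 1) * (2 / n) + 2 / n = (2 : ℝ) := by field_simp; ring
  exact ⟨i, by linarith [hres huv]⟩
end

section
/- Let G be a connected graph on n vertices. Then LE_R(G) ≤ (1/n) Σ_{i=1}^n RTr(i) + √((n−1)·[2F − ((1/n) Σ_{i=1}^n RTr(i))²]), where f = Σ_{1≤i<j≤n} r(i,j)² and F = f + (1/2) Σ_{i=1}^n (RTr(i) − (1/n) Σ_{j=1}^n RTr(j))². -/
open Matrix Polynomial BigOperators

/-!
The Moore–Penrose inverse of the Laplacian is symmetric and positive semidefinite, so resistance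
distances are nonnegative and `R^L` is a real symmetric matrix annihilating the all-ones vector.
Its eigenvalues therefore sum to `∑ RTr(i) = n · avg`, have square sum
`tr ((R^L)²) = ∑ RTr(i)² + 2f`, and include `0`; together these give `∑ (γᵢ - avg)² = 2F`.
The zero eigenvalue contributes `avg` to the energy, and Cauchy–Schwarz bounds the remaining
`n - 1` terms by `√((n - 1)(2F - avg²))`.
-/

open Finset

theorem Finset.sum_sum_eq_two_mul_sum_filter_lt {ι R : Type*} [Fintype ι] [LinearOrder ι]
    [NonAssocSemiring R] (r : ι → ι → R) (hsymm : ∀ i j, r i j = r j i)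
    (hdiag : ∀ i, r i i = 0) :
    ∑ i, ∑ j, r i j = 2 * ∑ e ∈ univ.filter (fun e : ι × ι => e.1 < e.2), r e.1 e.2 := by
  have hsplit : ∀ i j, r i j = (if i < j then r i j else 0) + (if j < i then r i j else 0) := by
    intro i j
    rcases lt_trichotomy i j with h | rfl | h
    · simp [h, h.not_gt]
    · simp [hdiag]
    · simp [h, h.not_gt]
  calc ∑ i, ∑ j, r i j
      = ∑ i, ∑ j, (if i < j then r i j else 0) +
          ∑ i, ∑ j, (if j < i then r i j else 0) := by
        simp only [← sum_add_distrib, ← hsplit]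
    _ = 2 * ∑ i, ∑ j, (if i < j then r i j else 0) := by
        rw [sum_comm (f := fun i j => if j < i then r i j else 0), two_mul]
        simp only [hsymm]
    _ = _ := by rw [sum_filter, ← univ_product_univ, sum_product]

theorem Finset.sum_sub_sq_eq {ι : Type*} (s : Finset ι) (x : ι → ℝ) :
    ∑ i ∈ s, (x i - (∑ j ∈ s, x j) / #s) ^ 2 =
      ∑ i ∈ s, x i ^ 2 - (∑ i ∈ s, x i) ^ 2 / #s := by
  rcases s.eq_empty_or_nonempty with rfl | hs
  · simp
  have hcard : (#s : ℝ) ≠ 0 := by exact_mod_cast hs.card_pos.ne'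
  simp only [sub_sq, sum_add_distrib, sum_sub_distrib, ← sum_mul, ← mul_sum, sum_const,
    nsmul_eq_mul]
  field_simp
  ring

theorem Finset.sum_abs_sub_le_of_eq_zero {ι : Type*} [Fintype ι] [DecidableEq ι] (x : ι → ℝ)
    {a : ℝ} (ha : 0 ≤ a) {i₀ : ι} (hx : x i₀ = 0) :
    ∑ i, |x i - a| ≤ a + √((Fintype.card ι - 1) * (∑ i, (x i - a) ^ 2 - a ^ 2)) := by
  rw [← add_sum_erase _ _ (mem_univ i₀),
    ← add_sum_erase _ (fun i => (x i - a) ^ 2) (mem_univ i₀), hx, zero_sub, abs_neg,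
    abs_of_nonneg ha, neg_sq, add_sub_cancel_left]
  have hcard : (#(univ.erase i₀) : ℝ) = Fintype.card ι - 1 := by
    rw [card_erase_of_mem (mem_univ i₀), card_univ,
      Nat.cast_pred (Fintype.card_pos_iff.mpr ⟨i₀⟩)]
  gcongr
  refine Real.le_sqrt_of_sq_le ?_
  simpa only [hcard, sq_abs] using
    sq_sum_le_card_mul_sum_sq (s := univ.erase i₀) (f := fun i => |x i - a|)

theorem Matrix.IsHermitian.sum_comp_eigenvalues {V : Type*} [Fintype V] [DecidableEq V]
    {A : Matrix V V ℝ} (hA : A.IsHermitian) {γ : V → ℝ}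
    (hγ : A.charpoly = ∏ i, (X - C (γ i))) (g : ℝ → ℝ) :
    ∑ i, g (hA.eigenvalues i) = ∑ i, g (γ i) := by
  have hroots := congrArg roots (hA.charpoly_eq.symm.trans hγ)
  rw [roots_prod _ _ (prod_ne_zero_iff.mpr fun i _ => X_sub_C_ne_zero _),
    roots_prod _ _ (prod_ne_zero_iff.mpr fun i _ => X_sub_C_ne_zero _)] at hroots
  simp only [roots_X_sub_C, Multiset.bind_singleton] at hroots
  simpa [sum_map_val] using congrArg (fun s => (s.map g).sum) hroots

theorem Matrix.IsHermitian.trace_mul_self_eq_sum_sq_eigenvalues {V : Type*} [Fintype V]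
    [DecidableEq V] {A : Matrix V V ℝ} (hA : A.IsHermitian) :
    (A * A).trace = ∑ i, hA.eigenvalues i ^ 2 := by
  conv_lhs => rw [hA.spectral_theorem, ← map_mul, Unitary.conjStarAlgAut_apply, trace_mul_cycle,
    Unitary.coe_star_mul_self, Matrix.one_mul, diagonal_mul_diagonal, trace_diagonal]
  simp [sq]

theorem Matrix.IsHermitian.exists_eigenvalues_eq_zero {V : Type*} [Fintype V] [DecidableEq V]
    {A : Matrix V V ℝ} (hA : A.IsHermitian) (hdet : A.det = 0) : ∃ i, hA.eigenvalues i = 0 := by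
  simpa [hA.det_eq_prod_eigenvalues, prod_eq_zero_iff] using hdet

namespace IsMoorePenroseInv

variable {V : Type*} [Fintype V] {A B C : Matrix V V ℝ}

theorem transpose (h : IsMoorePenroseInv A B) : IsMoorePenroseInv Aᵀ Bᵀ := by
  obtain ⟨h₁, h₂, h₃, h₄⟩ := h
  refine ⟨?_, ?_, ?_, ?_⟩
  · rw [← transpose_mul, ← transpose_mul, ← Matrix.mul_assoc, h₁]
  · rw [← transpose_mul, ← transpose_mul, ← Matrix.mul_assoc, h₂]
  · rw [← transpose_mul, transpose_transpose, h₄]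
  · rw [← transpose_mul, transpose_transpose, h₃]

theorem unique (hB : IsMoorePenroseInv A B) (hC : IsMoorePenroseInv A C) : B = C := by
  obtain ⟨hB₁, hB₂, hB₃, hB₄⟩ := hB
  obtain ⟨hC₁, hC₂, hC₃, hC₄⟩ := hC
  have hleft : A * B = A * C :=
    calc A * B = ((A * C) * (A * B))ᵀ := by rw [← Matrix.mul_assoc, hC₁, hB₃]
      _ = (A * B) * (A * C) := by rw [transpose_mul, hB₃, hC₃]
      _ = A * C := by rw [← Matrix.mul_assoc, hB₁]
  have hright : B * A = C * A :=
    calc B * A = (B * (A * C * A))ᵀ := by rw [hC₁, hB₄]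
      _ = ((B * A) * (C * A))ᵀ := by simp only [Matrix.mul_assoc]
      _ = (C * A) * (B * A) := by rw [transpose_mul, hB₄, hC₄]
      _ = C * A := by rw [Matrix.mul_assoc, ← Matrix.mul_assoc A, hB₁]
  calc B = B * A * B := hB₂.symm
    _ = C * A * C := by rw [Matrix.mul_assoc, hleft, ← Matrix.mul_assoc, hright]
    _ = C := hC₂

theorem isSymm (hA : A.IsSymm) (h : IsMoorePenroseInv A B) : B.IsSymm :=
  unique (hA.eq ▸ h.transpose) h

theorem posSemidef (hA : A.PosSemidef) (h : IsMoorePenroseInv A B) : B.PosSemidef := by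
  have hB : Bᵀ = B := h.isSymm (isHermitian_iff_isSymm.mp hA.isHermitian)
  simpa [hB, h.2.1] using hA.conjTranspose_mul_mul_same B

end IsMoorePenroseInv

section Resistance

variable {V : Type*} {B : Matrix V V ℝ}

theorem resDist_self_s19 (i : V) : resDist B i i = 0 := by
  unfold resDist; ring

theorem resDist_comm_s19 (hB : B.IsSymm) (i j : V) : resDist B i j = resDist B j i := by
  unfold resDist; rw [hB.apply i j]; ring

theorem resDist_nonneg [Fintype V] [DecidableEq V] (hB : B.PosSemidef) (i j : V) :
    0 ≤ resDist B i j := by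
  have h := hB.dotProduct_mulVec_nonneg (Pi.single i 1 - Pi.single j 1)
  have hji : B j i = B i j := (isHermitian_iff_isSymm.mp hB.isHermitian).apply i j
  simp only [star_trivial, mulVec_sub, dotProduct_sub, sub_dotProduct, mulVec_single,
    single_dotProduct, Pi.smul_apply, op_smul_eq_mul, col_apply, one_mul, hji] at h
  simp only [resDist]
  linarith

theorem resTrans_nonneg [Fintype V] [DecidableEq V] (hB : B.PosSemidef) (v : V) :
    0 ≤ resTrans B v :=
  sum_nonneg fun u _ => resDist_nonneg hB u v

variable [DecidableEq V]

theorem resMatrix_eq : resMatrix B = Matrix.of (resDist B) := by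
  ext i j
  by_cases h : i = j
  · simp [resMatrix, h, resDist_self_s19]
  · simp [resMatrix, h]

variable [Fintype V]

theorem resLap_apply (i j : V) :
    resLap B i j = (if i = j then resTrans B i else 0) - resDist B i j := by
  simp [resLap, resMatrix_eq, diagonal_apply]

theorem isSymm_resLap (hB : B.IsSymm) : (resLap B).IsSymm := by
  ext i j
  simp only [transpose_apply, resLap_apply, resDist_comm_s19 hB j i, eq_comm (a := j)]
  split_ifs with h <;> simp [h]

theorem trace_resLap : (resLap B).trace = ∑ i, resTrans B i := by
  simp [trace, resLap_apply, resDist_self_s19]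

theorem resLap_mulVec_one (hB : B.IsSymm) : resLap B *ᵥ 1 = 0 := by
  ext i
  simp [mulVec, dotProduct, resLap_apply, sum_sub_distrib, resTrans, resDist_comm_s19 hB i]

theorem trace_resLap_mul_self (hB : B.IsSymm) :
    (resLap B * resLap B).trace = ∑ i, resTrans B i ^ 2 + ∑ i, ∑ j, resDist B i j ^ 2 := by
  rw [← sum_add_distrib]
  refine sum_congr rfl fun i _ => ?_
  have hentry : ∀ j, resLap B i j * resLap B j i =
      (if i = j then resTrans B i ^ 2 else 0) + resDist B i j ^ 2 := by
    intro j
    by_cases h : i = j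
    · subst h; simp [resLap_apply, resDist_self_s19, sq]
    · simp [resLap_apply, h, Ne.symm h, resDist_comm_s19 hB j i, sq]
  simp [mul_apply, hentry, sum_add_distrib]

end Resistance

theorem resLapEnergy_upper_bound_general {n : ℕ} (hn : 0 < n)
    (G : SimpleGraph (Fin n)) [DecidableRel G.Adj]
    (Ldag : Matrix (Fin n) (Fin n) ℝ)
    (hpen : IsMoorePenroseInv (G.lapMatrix ℝ) Ldag)
    (γL : Fin n → ℝ) (hchar : (resLap Ldag).charpoly = ∏ i, (X - C (γL i)))
    (f F LE avg : ℝ)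
    (havg : avg = (∑ i, resTrans Ldag i) / n)
    (hf : f = ∑ e ∈ Finset.univ.filter (fun e : Fin n × Fin n => e.1 < e.2),
      resDist Ldag e.1 e.2 ^ 2)
    (hF : F = f + (1 / 2) * ∑ i, (resTrans Ldag i - avg) ^ 2)
    (hLE : LE = ∑ i, |γL i - avg|) :
    LE ≤ avg + Real.sqrt ((n - 1) * (2 * F - avg ^ 2)) := by
  have : Nonempty (Fin n) := Fin.pos_iff_nonempty.mp hn
  have hB : Ldag.PosSemidef := hpen.posSemidef (G.posSemidef_lapMatrix ℝ)
  have hsymm : Ldag.IsSymm := isHermitian_iff_isSymm.mp hB.isHermitian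
  have hH : (resLap Ldag).IsHermitian := isHermitian_iff_isSymm.mpr (isSymm_resLap hsymm)
  set μ := hH.eigenvalues
  obtain ⟨i₀, hi₀⟩ := hH.exists_eigenvalues_eq_zero <|
    exists_mulVec_eq_zero_iff.mp ⟨1, one_ne_zero, resLap_mulVec_one hsymm⟩
  have hsum : ∑ i, μ i = ∑ i, resTrans Ldag i := by
    simpa [← trace_resLap] using hH.trace_eq_sum_eigenvalues.symm
  have hsum_sq : ∑ i, μ i ^ 2 = ∑ i, resTrans Ldag i ^ 2 + 2 * f := by
    rw [← hH.trace_mul_self_eq_sum_sq_eigenvalues, trace_resLap_mul_self hsymm,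
      sum_sum_eq_two_mul_sum_filter_lt (fun i j => resDist Ldag i j ^ 2)
        (fun i j => by rw [resDist_comm_s19 hsymm]) (fun i => by simp [resDist_self_s19]), hf]
  have hdev : ∑ i, (μ i - avg) ^ 2 = 2 * F := by
    have hvar := sum_sub_sq_eq univ μ
    have hvar' := sum_sub_sq_eq univ (resTrans Ldag)
    rw [card_univ, Fintype.card_fin] at hvar hvar'
    rw [hF, havg, hvar', ← hsum, hvar, hsum_sq]
    ring
  have havg_nonneg : 0 ≤ avg :=
    havg ▸ div_nonneg (sum_nonneg fun i _ => resTrans_nonneg hB i) n.cast_nonneg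
  calc LE = ∑ i, |μ i - avg| := by rw [hLE, hH.sum_comp_eigenvalues hchar (|· - avg|)]
    _ ≤ avg + √((Fintype.card (Fin n) - 1) * (∑ i, (μ i - avg) ^ 2 - avg ^ 2)) :=
      sum_abs_sub_le_of_eq_zero μ havg_nonneg hi₀
    _ = _ := by rw [hdev, Fintype.card_fin]

theorem resLapEnergy_upper_bound {n : ℕ} (hn : 0 < n)
    (G : SimpleGraph (Fin n)) [DecidableRel G.Adj] (hG : G.Connected)
    (Ldag : Matrix (Fin n) (Fin n) ℝ)
    (hpen : IsMoorePenroseInv (G.lapMatrix ℝ) Ldag)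
    (γL : Fin n → ℝ) (hchar : (resLap Ldag).charpoly = ∏ i, (X - C (γL i)))
    (f F LE avg : ℝ)
    (havg : avg = (∑ i, resTrans Ldag i) / n)
    (hf : f = ∑ e ∈ Finset.univ.filter (fun e : Fin n × Fin n => e.1 < e.2),
      resDist Ldag e.1 e.2 ^ 2)
    (hF : F = f + (1 / 2) * ∑ i, (resTrans Ldag i - avg) ^ 2)
    (hLE : LE = ∑ i, |γL i - avg|) :
    LE ≤ avg + Real.sqrt ((n - 1) * (2 * F - avg ^ 2)) :=
  resLapEnergy_upper_bound_general hn G Ldag hpen γL hchar f F LE avg havg hf hF hLE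
end
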